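/- arXiv:1711.05353 — 6 statements merged into one kernel-verified Lean document; each statement's English description precedes it below -/
import Mathlib

section
/- Fix 1 ≤ i < j ≤ n and a subset S ⊆ ]i,j[ = {i+1,...,j−1}. Define the shard Σ(i,j,S) = { x ∈ R^n : x_i = x_j, x_i ≥ x_k for all k ∈ S, and x_i ≤ x_k for all k ∈ ]i,j[ \ S }. For ∅ ≠ R ⊊ [n], let ρ(R) ∈ R^n be any point with ρ(R)_u = a for all u ∈ R and ρ(R)_u = b for all u ∉ R, where a < b. Then ρ(R) ∈ Σ(i,j,S) if and only if either ({i,j} ⊆ R and S ⊆ ]i,j[ ∩ R) or ({i,j} ⊆ [n] \ R and ]i,j[ ∩ R ⊆ S). -/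
/-- Characterization of when the ray point `ρ(R)` lies in the shard `Σ(i,j,S)`. -/
theorem stmt3 (n i j : ℕ) (hi : 1 ≤ i) (hij : i < j) (hj : j ≤ n)
    (S : Finset ℕ) (hS : S ⊆ Finset.Ioo i j)
    (R : Finset ℕ) (hR : R ⊆ Finset.Icc 1 n)
    (hne : R.Nonempty) (hRn : R ≠ Finset.Icc 1 n)
    (a b : ℝ) (hab : a < b) (x : ℕ → ℝ)
    (hx : ∀ u ∈ Finset.Icc 1 n, (u ∈ R → x u = a) ∧ (u ∉ R → x u = b)) :
    (x i = x j ∧ (∀ k ∈ S, x k ≤ x i) ∧ (∀ k ∈ Finset.Ioo i j \ S, x i ≤ x k))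
      ↔ ((i ∈ R ∧ j ∈ R ∧ S ⊆ Finset.Ioo i j ∩ R) ∨
          (i ∉ R ∧ j ∉ R ∧ Finset.Ioo i j ∩ R ⊆ S)) := by
  have hiI : i ∈ Finset.Icc 1 n := Finset.mem_Icc.2 ⟨hi, le_trans (le_of_lt hij) hj⟩
  have hjI : j ∈ Finset.Icc 1 n := Finset.mem_Icc.2 ⟨le_trans hi (le_of_lt hij), hj⟩
  have hkI : ∀ k ∈ Finset.Ioo i j, k ∈ Finset.Icc 1 n := by
    intro k hk
    rw [Finset.mem_Ioo] at hk
    exact Finset.mem_Icc.2 ⟨le_trans hi (le_of_lt hk.1), le_trans (le_of_lt hk.2) hj⟩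
  have hval : ∀ k ∈ Finset.Icc 1 n, x k = a ∨ x k = b := by
    intro k hk
    by_cases h : k ∈ R
    · exact Or.inl ((hx k hk).1 h)
    · exact Or.inr ((hx k hk).2 h)
  by_cases hiR : i ∈ R <;> by_cases hjR : j ∈ R
  · -- both in R
    have hxi : x i = a := (hx i hiI).1 hiR
    have hxj : x j = a := (hx j hjI).1 hjR
    constructor
    · rintro ⟨-, h1, -⟩
      refine Or.inl ⟨hiR, hjR, fun k hk => Finset.mem_inter.2 ⟨hS hk, ?_⟩⟩
      by_contra hkR
      have := h1 k hk
      rw [hxi, (hx k (hkI k (hS hk))).2 hkR] at this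
      exact absurd this (not_le.2 hab)
    · rintro (⟨-, -, hsub⟩ | ⟨h, -, -⟩)
      · refine ⟨hxi.trans hxj.symm, fun k hk => ?_, fun k hk => ?_⟩
        · rw [hxi, (hx k (hkI k (hS hk))).1 (Finset.mem_inter.1 (hsub hk)).2]
        · rw [hxi]
          rcases hval k (hkI k (Finset.mem_sdiff.1 hk).1) with h | h <;> rw [h]
          exact le_of_lt hab
      · exact absurd hiR h
  · -- i ∈ R, j ∉ R
    have hxi : x i = a := (hx i hiI).1 hiR
    have hxj : x j = b := (hx j hjI).2 hjR
    constructor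
    · rintro ⟨h, -, -⟩
      rw [hxi, hxj] at h
      exact absurd h (ne_of_lt hab)
    · rintro (⟨-, h, -⟩ | ⟨h, -, -⟩)
      · exact absurd h hjR
      · exact absurd hiR h
  · -- i ∉ R, j ∈ R
    have hxi : x i = b := (hx i hiI).2 hiR
    have hxj : x j = a := (hx j hjI).1 hjR
    constructor
    · rintro ⟨h, -, -⟩
      rw [hxi, hxj] at h
      exact absurd h.symm (ne_of_lt hab)
    · rintro (⟨h, -, -⟩ | ⟨-, h, -⟩)
      · exact absurd h hiR
      · exact absurd hjR h
  · -- both not in R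
    have hxi : x i = b := (hx i hiI).2 hiR
    have hxj : x j = b := (hx j hjI).2 hjR
    constructor
    · rintro ⟨-, -, h2⟩
      refine Or.inr ⟨hiR, hjR, fun k hk => ?_⟩
      rcases Finset.mem_inter.1 hk with ⟨hk1, hk2⟩
      by_contra hkS
      have := h2 k (Finset.mem_sdiff.2 ⟨hk1, hkS⟩)
      rw [hxi, (hx k (hkI k hk1)).1 hk2] at this
      exact absurd this (not_le.2 hab)
    · rintro (⟨h, -, -⟩ | ⟨-, -, hsub⟩)
      · exact absurd h hiR
      · refine ⟨hxi.trans hxj.symm, fun k hk => ?_, fun k hk => ?_⟩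
        · rw [hxi]
          rcases hval k (hkI k (hS hk)) with h | h <;> rw [h]
          exact le_of_lt hab
        · rcases Finset.mem_sdiff.1 hk with ⟨hk1, hkS⟩
          have hkR : k ∉ R := fun hkR => hkS (hsub (Finset.mem_inter.2 ⟨hk1, hkR⟩))
          rw [hxi, (hx k (hkI k hk1)).2 hkR]
end

section
/- Let Σ = Σ(i,j,S) be a shard and let R, R' ⊆ [n] with R \ {k} = R' \ {k'}, k ∈ R \ R', k' ∈ R' \ R, k ≠ k'. If {k,k'} ∩ [i,j] = {k} (i.e., k ∈ [i,j] but k' ∉ [i,j]), then γ(Σ,R) = γ(Σ, R∪R') and γ(Σ,R') = γ(Σ, R∩R'). -/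
/-- The contribution `γ(Σ(i,j,S), R)`. -/
def gamma (i j : ℕ) (S R : Finset ℕ) : ℕ :=
  if (R ∩ {i, j}).card = 1 ∧ S = R ∩ Finset.Ioo i j then 1 else 0

/-- If `{k,k'} ∩ [i,j] = {k}` then `γ(Σ,R) = γ(Σ, R∪R')` and `γ(Σ,R') = γ(Σ, R∩R')`. -/
theorem stmt9 (n i j k k' : ℕ) (hi : 1 ≤ i) (hij : i < j) (hj : j ≤ n)
    (S : Finset ℕ) (hS : S ⊆ Finset.Ioo i j)
    (R R' : Finset ℕ) (hR : R ⊆ Finset.Icc 1 n) (hR' : R' ⊆ Finset.Icc 1 n)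
    (hk : k ∈ R \ R') (hk' : k' ∈ R' \ R) (hkk : k ≠ k')
    (herase : R.erase k = R'.erase k')
    (hin : k ∈ Finset.Icc i j) (hout : k' ∉ Finset.Icc i j) :
    gamma i j S R = gamma i j S (R ∪ R') ∧
    gamma i j S R' = gamma i j S (R ∩ R') := by
  simp only [Finset.mem_Icc, not_and_or, not_le] at hout
  have hk'ij : k' ∉ ({i, j} : Finset ℕ) := by
    simp only [Finset.mem_insert, Finset.mem_singleton]
    rintro (rfl | rfl) <;> omega
  have hk'Ioo : k' ∉ Finset.Ioo i j := by
    simp only [Finset.mem_Ioo]; omega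
  have hmem := Finset.ext_iff.mp herase
  simp only [Finset.mem_erase] at hmem
  simp only [Finset.mem_sdiff] at hk hk'
  have hU : R ∪ R' = insert k' R := by
    ext x
    simp only [Finset.mem_union, Finset.mem_insert]
    constructor
    · rintro (h | h)
      · exact Or.inr h
      · by_cases hx : x = k'
        · exact Or.inl hx
        · exact Or.inr ((hmem x).mpr ⟨hx, h⟩).2
    · rintro (rfl | h)
      · exact Or.inr hk'.1
      · exact Or.inl h
  have hI : R ∩ R' = R'.erase k' := by
    ext x
    simp only [Finset.mem_inter, Finset.mem_erase]
    constructor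
    · rintro ⟨h1, h2⟩
      exact ⟨fun hx => hk'.2 (hx ▸ h1), h2⟩
    · rintro ⟨h1, h2⟩
      exact ⟨((hmem x).mpr ⟨h1, h2⟩).2, h2⟩
  rw [hU, hI]
  constructor
  · unfold gamma
    rw [Finset.insert_inter_of_notMem hk'ij, Finset.insert_inter_of_notMem hk'Ioo]
  · unfold gamma
    rw [Finset.erase_inter, Finset.erase_eq_of_notMem (by simp [hk'ij]),
        Finset.erase_inter, Finset.erase_eq_of_notMem (by simp [hk'Ioo])]
end

section
/- Let R, R' ⊆ [n] with R \ {k} = R' \ {k'}, k ∈ R \ R', k' ∈ R' \ R, k < k'. Set Σ• = Σ(k, k', (R ∩ R') ∩ ]k,k'[). Then every shard Σ(i,j,S) satisfying {k,k'} ⊆ [i,j] and S \ {k,k'} = (R ∩ R') ∩ ]i,j[ is forced by Σ•, that is, Σ(i,j,S) ≺ Σ• or Σ(i,j,S) = Σ• in the forcing order, where Σ(a,b,T) forces Σ(c,d,U) iff c ≤ a < b ≤ d and T = U ∩ ]a,b[. Additionally γ(Σ•, R) = γ(Σ•, R') = 1 and γ(Σ•, R∩R') = γ(Σ•, R∪R')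 = 0. -/
/-- Every shard `Σ(i,j,S)` with `{k,k'} ⊆ [i,j]` and `S \ {k,k'} = (R∩R') ∩ ]i,j[`
is forced by `Σ• = Σ(k,k',(R∩R') ∩ ]k,k'[)`, i.e. `i ≤ k < k' ≤ j` and
`(R∩R') ∩ ]k,k'[ = S ∩ ]k,k'[`.  Moreover `γ(Σ•,R) = γ(Σ•,R') = 1` and
`γ(Σ•,R∩R') = γ(Σ•,R∪R') = 0`. -/
theorem stmt11 (n k k' : ℕ) (R R' : Finset ℕ)
    (hR : R ⊆ Finset.Icc 1 n) (hR' : R' ⊆ Finset.Icc 1 n)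
    (hk : k ∈ R \ R') (hk' : k' ∈ R' \ R) (hkk : k < k')
    (herase : R.erase k = R'.erase k') :
    (∀ i j : ℕ, ∀ S : Finset ℕ, 1 ≤ i → i < j → j ≤ n → S ⊆ Finset.Ioo i j →
        k ∈ Finset.Icc i j → k' ∈ Finset.Icc i j →
        S \ {k, k'} = (R ∩ R') ∩ Finset.Ioo i j →
        (i ≤ k ∧ k < k' ∧ k' ≤ j ∧
          (R ∩ R') ∩ Finset.Ioo k k' = S ∩ Finset.Ioo k k')) ∧
    gamma k k' ((R ∩ R') ∩ Finset.Ioo k k') R = 1 ∧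
    gamma k k' ((R ∩ R') ∩ Finset.Ioo k k') R' = 1 ∧
    gamma k k' ((R ∩ R') ∩ Finset.Ioo k k') (R ∩ R') = 0 ∧
    gamma k k' ((R ∩ R') ∩ Finset.Ioo k k') (R ∪ R') = 0 := by
  obtain ⟨hkR, hkR'⟩ := Finset.mem_sdiff.1 hk
  obtain ⟨hk'R', hk'R⟩ := Finset.mem_sdiff.1 hk'
  have hne : k ≠ k' := hkk.ne
  -- membership transfer: for x ≠ k, x≠k', x∈R ↔ x∈R'
  have htrans : ∀ x : ℕ, x ≠ k → x ≠ k' → (x ∈ R ↔ x ∈ R') := by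
    intro x hx hx'
    constructor
    · intro h
      have : x ∈ R'.erase k' := herase ▸ Finset.mem_erase.2 ⟨hx, h⟩
      exact (Finset.mem_erase.1 this).2
    · intro h
      have : x ∈ R.erase k := herase ▸ Finset.mem_erase.2 ⟨hx', h⟩
      exact (Finset.mem_erase.1 this).2
  refine ⟨?_, ?_, ?_, ?_, ?_⟩
  · intro i j S hi hij hj hS hki hk'i hSdiff
    have h1 : i ≤ k := (Finset.mem_Icc.1 hki).1
    have h4 : k' ≤ j := (Finset.mem_Icc.1 hk'i).2
    refine ⟨h1, hkk, h4, ?_⟩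
    ext x
    simp only [Finset.mem_inter, Finset.mem_Ioo]
    constructor
    · rintro ⟨hx, hlo, hhi⟩
      have hxS : x ∈ S \ ({k, k'} : Finset ℕ) := by
        rw [hSdiff]
        exact Finset.mem_inter.2 ⟨Finset.mem_inter.2 hx, Finset.mem_Ioo.2 ⟨lt_of_le_of_lt h1 hlo, lt_of_lt_of_le hhi h4⟩⟩
      exact ⟨(Finset.mem_sdiff.1 hxS).1, hlo, hhi⟩
    · rintro ⟨hx, hlo, hhi⟩
      have hxS : x ∈ S \ ({k, k'} : Finset ℕ) := by
        refine Finset.mem_sdiff.2 ⟨hx, ?_⟩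
        simp only [Finset.mem_insert, Finset.mem_singleton]
        push_neg
        exact ⟨hlo.ne', hhi.ne⟩
      rw [hSdiff] at hxS
      exact ⟨Finset.mem_inter.1 (Finset.mem_inter.1 hxS).1, hlo, hhi⟩
  · unfold gamma
    rw [if_pos]
    constructor
    · have : R ∩ ({k, k'} : Finset ℕ) = {k} := by
        ext x
        simp only [Finset.mem_inter, Finset.mem_insert, Finset.mem_singleton]
        constructor
        · rintro ⟨hx, rfl | rfl⟩
          · rfl
          · exact absurd hx hk'R
        · rintro rfl; exact ⟨hkR, Or.inl rfl⟩
      rw [this, Finset.card_singleton]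
    · ext x
      simp only [Finset.mem_inter, Finset.mem_Ioo, and_assoc]
      constructor
      · rintro ⟨hx, _, h⟩; exact ⟨hx, h⟩
      · rintro ⟨hx, hlo, hhi⟩
        exact ⟨hx, (htrans x hlo.ne' hhi.ne).1 hx, hlo, hhi⟩
  · unfold gamma
    rw [if_pos]
    constructor
    · have : R' ∩ ({k, k'} : Finset ℕ) = {k'} := by
        ext x
        simp only [Finset.mem_inter, Finset.mem_insert, Finset.mem_singleton]
        constructor
        · rintro ⟨hx, rfl | rfl⟩
          · exact absurd hx hkR'
          · rfl
        · rintro rfl; exact ⟨hk'R', Or.inr rfl⟩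
      rw [this, Finset.card_singleton]
    · ext x
      simp only [Finset.mem_inter, Finset.mem_Ioo, and_assoc]
      constructor
      · rintro ⟨_, hx, h⟩; exact ⟨hx, h⟩
      · rintro ⟨hx, hlo, hhi⟩
        exact ⟨(htrans x hlo.ne' hhi.ne).2 hx, hx, hlo, hhi⟩
  · unfold gamma
    rw [if_neg]
    rintro ⟨hcard, -⟩
    have : (R ∩ R') ∩ ({k, k'} : Finset ℕ) = ∅ := by
      ext x
      simp only [Finset.mem_inter, Finset.mem_insert, Finset.mem_singleton,
        Finset.notMem_empty, iff_false]
      rintro ⟨⟨hx, hx'⟩, rfl | rfl⟩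
      · exact hkR' hx'
      · exact hk'R hx
    rw [this] at hcard
    simp at hcard
  · unfold gamma
    rw [if_neg]
    rintro ⟨hcard, -⟩
    have : (R ∪ R') ∩ ({k, k'} : Finset ℕ) = {k, k'} := by
      apply Finset.inter_eq_right.2
      intro x hx
      simp only [Finset.mem_insert, Finset.mem_singleton] at hx
      rcases hx with rfl | rfl
      · exact Finset.mem_union_left _ hkR
      · exact Finset.mem_union_right _ hk'R'
    rw [this, Finset.card_pair hne] at hcard
    omega
end

section
/- Submodular-type inequality for shard heights: Let f be a forcing dominant function on shards of the braid arrangement in R^n and let I be an upper ideal of the forcing order. Let R, R' ⊆ [n] with R \ {k} = R' \ {k'}, k ∈ R \ R', k' ∈ R' \ R, k < k'. Define h(R) = Σ_{Σ ∈ I} f(Σ)γ(Σ,R). Then h(R) + h(R') ≥ h(R∩R') + h(R∪R'), with equality if and only if the shard Σ• = Σ(k,k', (R∩R') ∩ ]k,k'[) does not belong to I. -/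
/-- The finite set of all shards `(i,j,S)` with `1 ≤ i < j ≤ n`, `S ⊆ ]i,j[`. -/
def shardFinset (n : ℕ) : Finset (ℕ × ℕ × Finset ℕ) :=
  ((Finset.Icc 1 n) ×ˢ (Finset.Icc 1 n) ×ˢ (Finset.Icc 1 n).powerset).filter
    (fun t => t.1 < t.2.1 ∧ t.2.2 ⊆ Finset.Ioo t.1 t.2.1)

/-- `f` is forcing dominant: for every shard `Σ`, `f(Σ)` strictly exceeds the sum
of `f(Σ')` over the shards `Σ' ≺ Σ`, i.e. over the shards `Σ'` strictly forced by
`Σ` (meaning `Σ'.i ≤ Σ.i < Σ.j ≤ Σ'.j` and `Σ.S = Σ'.S ∩ ]Σ.i,Σ.j[`, `Σ' ≠ Σ`). -/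
def ForcingDominant (n : ℕ) (f : ℕ × ℕ × Finset ℕ → ℝ) : Prop :=
  ∀ t ∈ shardFinset n,
    ∑ t' ∈ (shardFinset n).filter
        (fun t' => t' ≠ t ∧ t'.1 ≤ t.1 ∧ t.2.1 ≤ t'.2.1 ∧
          t.2.2 = t'.2.2 ∩ Finset.Ioo t.1 t.2.1), f t' < f t

/-- The height function `h_I(R) = Σ_{Σ ∈ I} f(Σ)·γ(Σ,R)`. -/
def quotientHeight (f : ℕ × ℕ × Finset ℕ → ℝ) (I : Finset (ℕ × ℕ × Finset ℕ))
    (R : Finset ℕ) : ℝ :=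
  ∑ t ∈ I, f t * (gamma t.1 t.2.1 t.2.2 R : ℝ)

/-!
Write `E = R ∩ R'`, so that `R = E + k`, `R' = E + k'` and `R ∪ R' = E + k + k'`. For a single
shard `Σ = Σ(i,j,S)` consider the second difference
`γ(Σ, E + k) + γ(Σ, E + k') - γ(Σ, E) - γ(Σ, E + k + k')`.
Since `{X : γ(Σ, X) = 1}` is order-convex it is always `≥ -1`; at `Σ•` it equals `2`; and it
vanishes unless `Σ ≼ Σ•`, because a point outside `[i, j]` does not affect `γ(Σ, ·)`, while if
`i ≤ k < k' ≤ j` all four sets meet `]k, k'[` in `E ∩ ]k, k'[`, which must agree with `S`.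
Summing against `f` over `I`: if `Σ• ∉ I` then, `I` being an upper ideal, no shard of `I` lies
below `Σ•` and the difference is `0`; if `Σ• ∈ I` it is at least
`2 f(Σ•) - Σ_{Σ ≺ Σ•} f(Σ) > f(Σ•) > 0` by forcing dominance.
-/

open Finset

/-- `ForcingLE a b` is `a ≼ b` in the forcing order: `b` is the shard with the smaller interval. -/
def ForcingLE (a b : ℕ × ℕ × Finset ℕ) : Prop :=
  a.1 ≤ b.1 ∧ b.2.1 ≤ a.2.1 ∧ b.2.2 = a.2.2 ∩ Ioo b.1 b.2.1

instance : DecidableRel ForcingLE := fun _ _ => inferInstanceAs (Decidable (_ ∧ _ ∧ _))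

lemma fst_lt_of_mem_shardFinset {n : ℕ} {t : ℕ × ℕ × Finset ℕ} (ht : t ∈ shardFinset n) :
    t.1 < t.2.1 :=
  (mem_filter.mp ht).2.1

lemma mem_shardFinset_of_forcingLE {n : ℕ} {a b : ℕ × ℕ × Finset ℕ} (ha : a ∈ shardFinset n)
    (hb : b.1 < b.2.1) (hab : ForcingLE a b) : b ∈ shardFinset n := by
  simp only [shardFinset, mem_filter, mem_product, mem_Icc, mem_powerset] at ha ⊢
  obtain ⟨hab1, hab2, hab3⟩ := hab
  have hS : b.2.2 ⊆ Ioo b.1 b.2.1 := hab3 ▸ inter_subset_right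
  refine ⟨⟨⟨by omega, by omega⟩, ⟨by omega, by omega⟩, fun x hx => ?_⟩, hb, hS⟩
  have := mem_Ioo.mp (hS hx)
  exact mem_Icc.mpr ⟨by omega, by omega⟩

lemma gamma_le_one (i j : ℕ) (S R : Finset ℕ) : gamma i j S R ≤ 1 := by
  unfold gamma; split <;> simp

section Gamma

variable {i j : ℕ} {S : Finset ℕ}

lemma gamma_eq_one_iff {R : Finset ℕ} :
    gamma i j S R = 1 ↔ (R ∩ {i, j}).card = 1 ∧ S = R ∩ Ioo i j := by
  unfold gamma; split <;> simp_all

lemma gamma_eq_one_of_subset_of_subset {X Y Z : Finset ℕ} (hXY : X ⊆ Y) (hYZ : Y ⊆ Z)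
    (hX : gamma i j S X = 1) (hZ : gamma i j S Z = 1) : gamma i j S Y = 1 := by
  rw [gamma_eq_one_iff] at hX hZ ⊢
  have hcard₁ := card_le_card (inter_subset_inter_right (u := {i, j}) hXY)
  have hcard₂ := card_le_card (inter_subset_inter_right (u := {i, j}) hYZ)
  refine ⟨by omega, le_antisymm ?_ ?_⟩
  · exact hX.2 ▸ inter_subset_inter_right hXY
  · exact hZ.2 ▸ inter_subset_inter_right hYZ

lemma gamma_insert_of_notMem_Icc (hij : i ≤ j) {x : ℕ} (hx : x ∉ Icc i j) (X : Finset ℕ) :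
    gamma i j S (insert x X) = gamma i j S X := by
  have hxij : x ∉ ({i, j} : Finset ℕ) := by
    simp only [mem_insert, mem_singleton]
    rintro (rfl | rfl) <;> simp_all
  have hxIoo : x ∉ Ioo i j := fun h => hx (Ioo_subset_Icc_self h)
  rw [gamma, gamma, insert_inter_of_notMem hxij, insert_inter_of_notMem hxIoo]

lemma gamma_eq_zero_of_inter_Ioo_ne {k k' : ℕ} {X : Finset ℕ} (hik : i ≤ k) (hk'j : k' ≤ j)
    (hne : X ∩ Ioo k k' ≠ S ∩ Ioo k k') : gamma i j S X = 0 := by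
  rw [gamma, if_neg]
  rintro ⟨-, rfl⟩
  rw [inter_assoc, inter_eq_right.mpr (Ioo_subset_Ioo hik hk'j)] at hne
  exact hne rfl

end Gamma

def gammaDefect (k k' : ℕ) (E : Finset ℕ) (t : ℕ × ℕ × Finset ℕ) : ℤ :=
  gamma t.1 t.2.1 t.2.2 (insert k E) + gamma t.1 t.2.1 t.2.2 (insert k' E)
    - gamma t.1 t.2.1 t.2.2 E - gamma t.1 t.2.1 t.2.2 (insert k (insert k' E))

lemma neg_one_le_gammaDefect (k k' : ℕ) (E : Finset ℕ) (t : ℕ × ℕ × Finset ℕ) :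
    -1 ≤ gammaDefect k k' E t := by
  obtain ⟨i, j, S⟩ := t
  have h₁ := gamma_le_one i j S E
  have h₂ := gamma_le_one i j S (insert k E)
  have h₃ := gamma_le_one i j S (insert k (insert k' E))
  dsimp only [gammaDefect]
  by_cases h : gamma i j S E = 1 ∧ gamma i j S (insert k (insert k' E)) = 1
  · have := gamma_eq_one_of_subset_of_subset (subset_insert k E)
      (insert_subset_insert k (subset_insert k' E)) h.1 h.2
    omega
  · omega

section GammaDefect

variable {k k' : ℕ} {E : Finset ℕ}

lemma gammaDefect_eq_zero_of_not_forcingLE {t : ℕ × ℕ × Finset ℕ} (ht : t.1 ≤ t.2.1)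
    (h : ¬ ForcingLE t (k, k', E ∩ Ioo k k')) : gammaDefect k k' E t = 0 := by
  obtain ⟨i, j, S⟩ := t
  dsimp only [gammaDefect]
  by_cases hk : k ∈ Icc i j
  · by_cases hk' : k' ∈ Icc i j
    · have hne : E ∩ Ioo k k' ≠ S ∩ Ioo k k' := fun h' =>
        h ⟨(mem_Icc.mp hk).1, (mem_Icc.mp hk').2, h'⟩
      -- all four sets meet `]k, k'[` in `E ∩ ]k, k'[`
      have hzero : ∀ X, X ∩ Ioo k k' = E ∩ Ioo k k' → gamma i j S X = 0 := fun X hX =>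
        gamma_eq_zero_of_inter_Ioo_ne (mem_Icc.mp hk).1 (mem_Icc.mp hk').2 (hX ▸ hne)
      have hk₀ : k ∉ Ioo k k' := by simp
      have hk'₀ : k' ∉ Ioo k k' := by simp
      rw [hzero E rfl, hzero _ (insert_inter_of_notMem hk₀), hzero _ (insert_inter_of_notMem hk'₀),
        hzero _ ((insert_inter_of_notMem hk₀).trans (insert_inter_of_notMem hk'₀))]
      rfl
    · rw [insert_comm, gamma_insert_of_notMem_Icc ht hk', gamma_insert_of_notMem_Icc ht hk']
      ring
  · rw [gamma_insert_of_notMem_Icc ht hk, gamma_insert_of_notMem_Icc ht hk]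
    ring

lemma gammaDefect_self (hkk : k < k') (hkE : k ∉ E) (hk'E : k' ∉ E) :
    gammaDefect k k' E (k, k', E ∩ Ioo k k') = 2 := by
  simp [gammaDefect, gamma, insert_inter_of_notMem, insert_inter_of_mem, hkk.ne,
    inter_insert_of_notMem hkE, inter_singleton_of_notMem hk'E]

end GammaDefect

lemma quotientHeight_sub_eq_sum_gammaDefect (f : ℕ × ℕ × Finset ℕ → ℝ)
    (I : Finset (ℕ × ℕ × Finset ℕ)) (k k' : ℕ) (E : Finset ℕ) :
    quotientHeight f I (insert k E) + quotientHeight f I (insert k' E)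
        - (quotientHeight f I E + quotientHeight f I (insert k (insert k' E)))
      = ∑ t ∈ I, f t * gammaDefect k k' E t := by
  simp only [quotientHeight, ← sum_add_distrib, ← sum_sub_distrib]
  refine sum_congr rfl fun t _ => ?_
  simp only [gammaDefect]
  push_cast
  ring

section QuotientHeight

variable {n : ℕ} {f : ℕ × ℕ × Finset ℕ → ℝ} {I : Finset (ℕ × ℕ × Finset ℕ)} {k k' : ℕ}
  {E : Finset ℕ}

lemma sum_filter_forcingLE_lt (hf : ∀ t, 0 ≤ f t) (hdom : ForcingDominant n f)
    (hI : I ⊆ shardFinset n) {b : ℕ × ℕ × Finset ℕ} (hb : b ∈ shardFinset n) :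
    ∑ t ∈ (I.erase b).filter (ForcingLE · b), f t < f b := by
  refine lt_of_le_of_lt (sum_le_sum_of_subset_of_nonneg ?_ fun t _ _ => hf t) (hdom b hb)
  intro t ht
  obtain ⟨⟨hne, htI⟩, hle⟩ := And.imp_left mem_erase.mp (mem_filter.mp ht)
  exact mem_filter.mpr ⟨hI htI, hne, hle⟩

lemma quotientHeight_add_eq_of_forall_not_forcingLE (hI : I ⊆ shardFinset n)
    (h : ∀ t ∈ I, ¬ ForcingLE t (k, k', E ∩ Ioo k k')) :
    quotientHeight f I (insert k E) + quotientHeight f I (insert k' E)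
      = quotientHeight f I E + quotientHeight f I (insert k (insert k' E)) := by
  rw [← sub_eq_zero, quotientHeight_sub_eq_sum_gammaDefect]
  refine sum_eq_zero fun t ht => ?_
  rw [gammaDefect_eq_zero_of_not_forcingLE (fst_lt_of_mem_shardFinset (hI ht)).le (h t ht)]
  simp

lemma quotientHeight_add_lt_of_mem (hf : ∀ t, 0 ≤ f t) (hdom : ForcingDominant n f)
    (hI : I ⊆ shardFinset n) (hkk : k < k') (hkE : k ∉ E) (hk'E : k' ∉ E)
    (hb : (k, k', E ∩ Ioo k k') ∈ I) :
    quotientHeight f I E + quotientHeight f I (insert k (insert k' E))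
      < quotientHeight f I (insert k E) + quotientHeight f I (insert k' E) := by
  set b : ℕ × ℕ × Finset ℕ := (k, k', E ∩ Ioo k k')
  have hrest : -∑ t ∈ (I.erase b).filter (ForcingLE · b), f t
      ≤ ∑ t ∈ I.erase b, f t * gammaDefect k k' E t := by
    rw [sum_filter, ← sum_neg_distrib]
    refine sum_le_sum fun t ht => ?_
    split_ifs with hle
    · have : (-1 : ℝ) ≤ gammaDefect k k' E t := mod_cast neg_one_le_gammaDefect k k' E t
      nlinarith [hf t]
    · rw [gammaDefect_eq_zero_of_not_forcingLE
        (fst_lt_of_mem_shardFinset (hI (mem_of_mem_erase ht))).le hle]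
      simp
  have hlower := sum_filter_forcingLE_lt hf hdom hI (hI hb)
  rw [← sub_pos, quotientHeight_sub_eq_sum_gammaDefect, ← add_sum_erase I _ hb,
    gammaDefect_self hkk hkE hk'E]
  push_cast
  linarith [hf b]

end QuotientHeight

lemma Finset.inter_eq_erase_of_erase_eq {α : Type*} [DecidableEq α] {R R' : Finset α} {k k' : α}
    (h : R.erase k = R'.erase k') (hk : k ∉ R') : R ∩ R' = R.erase k := by
  ext x
  refine ⟨fun hx => ?_, fun hx => ?_⟩
  · obtain ⟨hxR, hxR'⟩ := mem_inter.mp hx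
    exact mem_erase.mpr ⟨ne_of_mem_of_not_mem hxR' hk, hxR⟩
  · exact mem_inter.mpr ⟨mem_of_mem_erase hx, mem_of_mem_erase (h ▸ hx)⟩

lemma Finset.eq_insert_inter_of_erase_eq {α : Type*} [DecidableEq α] {R R' : Finset α}
    {k k' : α} (h : R.erase k = R'.erase k') (hkR : k ∈ R) (hkR' : k ∉ R') :
    R = insert k (R ∩ R') := by
  rw [inter_eq_erase_of_erase_eq h hkR', insert_erase hkR]

theorem stmt14_general (n : ℕ) (f : ℕ × ℕ × Finset ℕ → ℝ) (hfpos : ∀ t, 0 < f t)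
    (hdom : ForcingDominant n f)
    (I : Finset (ℕ × ℕ × Finset ℕ)) (hI : I ⊆ shardFinset n)
    (hup : ∀ a ∈ I, ∀ b ∈ shardFinset n,
      (a.1 ≤ b.1 ∧ b.2.1 ≤ a.2.1 ∧ b.2.2 = a.2.2 ∩ Finset.Ioo b.1 b.2.1) → b ∈ I)
    (R R' : Finset ℕ)
    (k k' : ℕ) (hk : k ∈ R \ R') (hk' : k' ∈ R' \ R) (hkk : k < k')
    (herase : R.erase k = R'.erase k') :
    quotientHeight f I (R ∩ R') + quotientHeight f I (R ∪ R')
        ≤ quotientHeight f I R + quotientHeight f I R' ∧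
    (quotientHeight f I R + quotientHeight f I R'
        = quotientHeight f I (R ∩ R') + quotientHeight f I (R ∪ R')
      ↔ (k, k', (R ∩ R') ∩ Finset.Ioo k k') ∉ I) := by
  obtain ⟨hkR, hkR'⟩ := mem_sdiff.mp hk
  obtain ⟨hk'R', hk'R⟩ := mem_sdiff.mp hk'
  have hRE := eq_insert_inter_of_erase_eq herase hkR hkR'
  have hR'E : R' = insert k' (R ∩ R') := by
    rw [inter_comm]; exact eq_insert_inter_of_erase_eq herase.symm hk'R' hk'R
  have hkE : k ∉ R ∩ R' := fun h => hkR' (mem_inter.mp h).2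
  have hk'E : k' ∉ R ∩ R' := fun h => hk'R (mem_inter.mp h).1
  generalize R ∩ R' = E at hRE hR'E hkE hk'E ⊢
  subst hRE hR'E
  rw [insert_union, union_insert, union_self]
  by_cases hb : (k, k', E ∩ Ioo k k') ∈ I
  · have hlt := quotientHeight_add_lt_of_mem (fun t => (hfpos t).le) hdom hI hkk hkE hk'E hb
    exact ⟨hlt.le, iff_of_false hlt.ne' (not_not_intro hb)⟩
  · have heq := quotientHeight_add_eq_of_forall_not_forcingLE (f := f) hI fun t ht hle =>
      hb (hup t ht _ (mem_shardFinset_of_forcingLE (hI ht) hkk hle) hle)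
    exact ⟨heq.ge, iff_of_true heq hb⟩

/-- Submodular-type inequality for shard heights, with equality iff the shard
`Σ• = Σ(k,k',(R∩R') ∩ ]k,k'[)` does not belong to the upper ideal `I`. -/
theorem stmt14 (n : ℕ) (f : ℕ × ℕ × Finset ℕ → ℝ) (hfpos : ∀ t, 0 < f t)
    (hdom : ForcingDominant n f)
    (I : Finset (ℕ × ℕ × Finset ℕ)) (hI : I ⊆ shardFinset n)
    (hup : ∀ a ∈ I, ∀ b ∈ shardFinset n,
      (a.1 ≤ b.1 ∧ b.2.1 ≤ a.2.1 ∧ b.2.2 = a.2.2 ∩ Finset.Ioo b.1 b.2.1) → b ∈ I)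
    (R R' : Finset ℕ) (hR : R ⊆ Finset.Icc 1 n) (hR' : R' ⊆ Finset.Icc 1 n)
    (k k' : ℕ) (hk : k ∈ R \ R') (hk' : k' ∈ R' \ R) (hkk : k < k')
    (herase : R.erase k = R'.erase k') :
    quotientHeight f I (R ∩ R') + quotientHeight f I (R ∪ R')
        ≤ quotientHeight f I R + quotientHeight f I R' ∧
    (quotientHeight f I R + quotientHeight f I R'
        = quotientHeight f I (R ∩ R') + quotientHeight f I (R ∪ R')
      ↔ (k, k', (R ∩ R') ∩ Finset.Ioo k k') ∉ I) :=
  stmt14_general n f hfpos hdom I hI hup R R' k k' hk hk' hkk herase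
end

section
/- Let Σ = Σ(i,j,S) be a shard and R, R' ⊆ [n] with R \ {k} = R' \ {k'}, k ∈ R \ R', k' ∈ R' \ R, k < k'. If Σ ≠ Σ• where Σ• = Σ(k,k', (R∩R') ∩ ]k,k'[) and Σ is NOT strictly forced by Σ•, then γ(Σ,R) + γ(Σ,R') = γ(Σ, R∩R') + γ(Σ, R∪R'). -/
lemma gamma_insert_aux (i j : ℕ) (S X : Finset ℕ) (a : ℕ)
    (h1 : a ∉ ({i, j} : Finset ℕ)) (h2 : a ∉ Finset.Ioo i j) :
    gamma i j S (insert a X) = gamma i j S X := by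
  unfold gamma
  rw [Finset.insert_inter_of_notMem h1, Finset.insert_inter_of_notMem h2]

lemma gamma_eq_zero_aux (i j k k' : ℕ) (hik : i ≤ k) (hkk : k < k') (hk'j : k' ≤ j)
    (S A X : Finset ℕ)
    (hX : ∀ x ∈ Finset.Ioo k k', (x ∈ X ↔ x ∈ A))
    (hnf : A ∩ Finset.Ioo k k' ≠ S ∩ Finset.Ioo k k') :
    gamma i j S X = 0 := by
  unfold gamma
  rw [if_neg]
  rintro ⟨-, rfl⟩
  apply hnf
  ext x
  simp only [Finset.mem_inter, Finset.mem_Ioo]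
  constructor
  · rintro ⟨hxA, hx1, hx2⟩
    have hX' := hX x (Finset.mem_Ioo.mpr ⟨hx1, hx2⟩)
    exact ⟨⟨hX'.mpr hxA, by omega, by omega⟩, hx1, hx2⟩
  · rintro ⟨⟨hxX, -, -⟩, hx1, hx2⟩
    exact ⟨(hX x (Finset.mem_Ioo.mpr ⟨hx1, hx2⟩)).mp hxX, hx1, hx2⟩

/-- If the shard `Σ(i,j,S)` is different from `Σ• = Σ(k,k',(R∩R') ∩ ]k,k'[)` and is
not strictly forced by `Σ•` (forcing: `Σ(k,k',T)` forces `Σ(i,j,S)` iff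
`i ≤ k < k' ≤ j` and `T = S ∩ ]k,k'[`), then the contribution identity
`γ(Σ,R) + γ(Σ,R') = γ(Σ,R∩R') + γ(Σ,R∪R')` holds. -/
theorem stmt15 (n i j k k' : ℕ) (hi : 1 ≤ i) (hij : i < j) (hj : j ≤ n)
    (S : Finset ℕ) (hS : S ⊆ Finset.Ioo i j)
    (R R' : Finset ℕ) (hR : R ⊆ Finset.Icc 1 n) (hR' : R' ⊆ Finset.Icc 1 n)
    (hk : k ∈ R \ R') (hk' : k' ∈ R' \ R) (hkk : k < k')
    (herase : R.erase k = R'.erase k')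
    (hne : (i, j, S) ≠ (k, k', (R ∩ R') ∩ Finset.Ioo k k'))
    (hnf : ¬ (i ≤ k ∧ k' ≤ j ∧
      (R ∩ R') ∩ Finset.Ioo k k' = S ∩ Finset.Ioo k k')) :
    gamma i j S R + gamma i j S R'
      = gamma i j S (R ∩ R') + gamma i j S (R ∪ R') := by
  obtain ⟨hkR, hkR'⟩ := Finset.mem_sdiff.mp hk
  obtain ⟨hk'R', hk'R⟩ := Finset.mem_sdiff.mp hk'
  have hmem : ∀ x, x ≠ k → x ≠ k' → (x ∈ R ↔ x ∈ R') := by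
    intro x hx hx'
    have := Finset.ext_iff.mp herase x
    simpa [Finset.mem_erase, hx, hx'] using this
  have h5 : R = insert k (R ∩ R') := by
    ext x
    simp only [Finset.mem_insert, Finset.mem_inter]
    constructor
    · intro hx
      by_cases hxk : x = k
      · exact Or.inl hxk
      · exact Or.inr ⟨hx, (hmem x hxk (by rintro rfl; exact hk'R hx)).mp hx⟩
    · rintro (rfl | ⟨hx, -⟩)
      · exact hkR
      · exact hx
  have h6 : R' = insert k' (R ∩ R') := by
    ext x
    simp only [Finset.mem_insert, Finset.mem_inter]
    constructor
    · intro hx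
      by_cases hxk : x = k'
      · exact Or.inl hxk
      · exact Or.inr ⟨(hmem x (by rintro rfl; exact hkR' hx) hxk).mpr hx, hx⟩
    · rintro (rfl | ⟨-, hx⟩)
      · exact hk'R'
      · exact hx
  have h3 : R ∪ R' = insert k R' := by
    ext x
    simp only [Finset.mem_union, Finset.mem_insert]
    constructor
    · rintro (hx | hx)
      · by_cases hxk : x = k
        · exact Or.inl hxk
        · by_cases hxk' : x = k'
          · subst hxk'; exact Or.inr hk'R'
          · exact Or.inr ((hmem x hxk hxk').mp hx)
      · exact Or.inr hx
    · rintro (rfl | hx)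
      · exact Or.inl hkR
      · exact Or.inr hx
  have h4 : R ∪ R' = insert k' R := by
    ext x
    simp only [Finset.mem_union, Finset.mem_insert]
    constructor
    · rintro (hx | hx)
      · exact Or.inr hx
      · by_cases hxk' : x = k'
        · exact Or.inl hxk'
        · by_cases hxk : x = k
          · subst hxk; exact Or.inr hkR
          · exact Or.inr ((hmem x hxk hxk').mpr hx)
    · rintro (rfl | hx)
      · exact Or.inr hk'R'
      · exact Or.inl hx
  by_cases hkI : i ≤ k ∧ k ≤ j
  · by_cases hk'I : i ≤ k' ∧ k' ≤ j
    · -- Case C: both in [i,j]; all four contributions vanish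
      have hnf' : (R ∩ R') ∩ Finset.Ioo k k' ≠ S ∩ Finset.Ioo k k' := fun h =>
        hnf ⟨hkI.1, hk'I.2, h⟩
      have keyR : ∀ x ∈ Finset.Ioo k k', (x ∈ R ↔ x ∈ R ∩ R') := by
        intro x hx
        rw [Finset.mem_Ioo] at hx
        have := hmem x (by omega) (by omega)
        simp only [Finset.mem_inter]
        tauto
      have keyR' : ∀ x ∈ Finset.Ioo k k', (x ∈ R' ↔ x ∈ R ∩ R') := by
        intro x hx
        rw [Finset.mem_Ioo] at hx
        have := hmem x (by omega) (by omega)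
        simp only [Finset.mem_inter]
        tauto
      have keyU : ∀ x ∈ Finset.Ioo k k', (x ∈ R ∪ R' ↔ x ∈ R ∩ R') := by
        intro x hx
        rw [Finset.mem_Ioo] at hx
        have := hmem x (by omega) (by omega)
        simp only [Finset.mem_inter, Finset.mem_union]
        tauto
      have keyA : ∀ x ∈ Finset.Ioo k k', (x ∈ R ∩ R' ↔ x ∈ R ∩ R') := fun _ _ => Iff.rfl
      rw [gamma_eq_zero_aux i j k k' hkI.1 hkk hk'I.2 S (R ∩ R') R keyR hnf',
        gamma_eq_zero_aux i j k k' hkI.1 hkk hk'I.2 S (R ∩ R') R' keyR' hnf',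
        gamma_eq_zero_aux i j k k' hkI.1 hkk hk'I.2 S (R ∩ R') (R ∩ R') keyA hnf',
        gamma_eq_zero_aux i j k k' hkI.1 hkk hk'I.2 S (R ∩ R') (R ∪ R') keyU hnf']
    · -- Case B: k' outside [i,j]
      have hk'1 : k' ∉ ({i, j} : Finset ℕ) := by
        simp only [Finset.mem_insert, Finset.mem_singleton]
        omega
      have hk'2 : k' ∉ Finset.Ioo i j := by
        simp only [Finset.mem_Ioo]
        omega
      have e1 : gamma i j S R' = gamma i j S (R ∩ R') := by
        conv_lhs => rw [h6, gamma_insert_aux i j S _ k' hk'1 hk'2]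
      have e2 : gamma i j S (R ∪ R') = gamma i j S R := by
        rw [h4, gamma_insert_aux i j S _ k' hk'1 hk'2]
      omega
  · -- Case A: k outside [i,j]
    have hk1 : k ∉ ({i, j} : Finset ℕ) := by
      simp only [Finset.mem_insert, Finset.mem_singleton]
      omega
    have hk2 : k ∉ Finset.Ioo i j := by
      simp only [Finset.mem_Ioo]
      omega
    have e1 : gamma i j S R = gamma i j S (R ∩ R') := by
      conv_lhs => rw [h5, gamma_insert_aux i j S _ k hk1 hk2]
    have e2 : gamma i j S (R ∪ R') = gamma i j S R' := by
      rw [h3, gamma_insert_aux i j S _ k hk1 hk2]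
    omega
end

section
/- With the setup of Lemma 2.4 (Lemma on the special shard): let σ, σ' be permutations differing by a swap in positions i, i+1, with k = σ(i), k' = σ(i+1), and assume k < k'. Set R = σ([i]), R' = σ'([i]). Then for every ℓ with i < ℓ ≤ n−1, the ray point ρ(σ([ℓ])) lies in the shard Σ(k, k', (R∩R') ∩ ]k,k'[), and for every ℓ with 1 ≤ ℓ < i, the ray point ρ(σ([ℓ])) also lies in that shard. -/
/-- With `σ, σ'` adjacent permutations differing by the swap of positions `i`, `i+1`,
`k = σ(i) < k' = σ(i+1)`, `R = σ([i])`, `R' = σ'([i])`: for every `ℓ ≠ i`, the ray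
point `ρ(σ([ℓ]))` (value `a` on `σ([ℓ])`, value `b` elsewhere, `a < b`) lies in the
shard `Σ(k, k', (R∩R') ∩ ]k,k'[)`. -/
theorem stmt17 (n i : ℕ) (hi : 1 ≤ i) (hin : i < n)
    (σ σ' : Equiv.Perm ℕ) (hσ' : σ' = σ * Equiv.swap i (i + 1))
    (hfix : ∀ m, m ∉ Finset.Icc 1 n → σ m = m)
    (k k' : ℕ) (hk : k = σ i) (hk' : k' = σ (i + 1)) (hkk : k < k')
    (R R' : Finset ℕ) (hR : R = (Finset.Icc 1 i).image ⇑σ)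
    (hR' : R' = (Finset.Icc 1 i).image ⇑σ')
    (ℓ : ℕ) (hl1 : 1 ≤ ℓ) (hl2 : ℓ ≤ n - 1) (hl3 : ℓ ≠ i)
    (a b : ℝ) (hab : a < b) (x : ℕ → ℝ)
    (hxa : ∀ u ∈ (Finset.Icc 1 ℓ).image ⇑σ, x u = a)
    (hxb : ∀ u, u ∉ (Finset.Icc 1 ℓ).image ⇑σ → x u = b) :
    x k = x k' ∧
    (∀ m ∈ (R ∩ R') ∩ Finset.Ioo k k', x m ≤ x k) ∧
    (∀ m ∈ Finset.Ioo k k' \ ((R ∩ R') ∩ Finset.Ioo k k'), x k ≤ x m) := by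
  set T := (Finset.Icc 1 ℓ).image ⇑σ with hT
  rcases lt_or_gt_of_ne hl3 with hlt | hgt
  · -- ℓ < i
    have hkT : k ∉ T := by
      simp only [hT, Finset.mem_image, Finset.mem_Icc]
      rintro ⟨j, ⟨_, hj⟩, hjk⟩
      have : j = i := σ.injective (by rw [hjk, hk])
      omega
    have hk'T : k' ∉ T := by
      simp only [hT, Finset.mem_image, Finset.mem_Icc]
      rintro ⟨j, ⟨_, hj⟩, hjk⟩
      have : j = i + 1 := σ.injective (by rw [hjk, hk'])
      omega
    have hxk : x k = b := hxb k hkT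
    have hxk' : x k' = b := hxb k' hk'T
    refine ⟨by rw [hxk, hxk'], ?_, ?_⟩
    · intro m hm
      rw [hxk]
      by_cases hmT : m ∈ T
      · rw [hxa m hmT]; exact hab.le
      · rw [hxb m hmT]
    · intro m hm
      rw [Finset.mem_sdiff] at hm
      rw [hxk]
      by_cases hmT : m ∈ T
      · exfalso
        apply hm.2
        simp only [hT, Finset.mem_image, Finset.mem_Icc] at hmT
        obtain ⟨j, ⟨hj1, hj2⟩, hjm⟩ := hmT
        refine Finset.mem_inter.mpr ⟨Finset.mem_inter.mpr ⟨?_, ?_⟩, hm.1⟩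
        · rw [hR]
          exact Finset.mem_image.mpr ⟨j, Finset.mem_Icc.mpr ⟨hj1, by omega⟩, hjm⟩
        · rw [hR', hσ']
          refine Finset.mem_image.mpr ⟨j, Finset.mem_Icc.mpr ⟨hj1, by omega⟩, ?_⟩
          simp [Equiv.Perm.mul_apply,
            Equiv.swap_apply_of_ne_of_ne (by omega : j ≠ i) (by omega : j ≠ i + 1), hjm]
      · rw [hxb m hmT]
  · -- ℓ > i
    have hkT : k ∈ T := Finset.mem_image.mpr ⟨i, Finset.mem_Icc.mpr ⟨hi, by omega⟩, hk.symm⟩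
    have hk'T : k' ∈ T :=
      Finset.mem_image.mpr ⟨i + 1, Finset.mem_Icc.mpr ⟨by omega, by omega⟩, hk'.symm⟩
    have hxk : x k = a := hxa k hkT
    have hxk' : x k' = a := hxa k' hk'T
    refine ⟨by rw [hxk, hxk'], ?_, ?_⟩
    · intro m hm
      rw [hxk]
      have hmR : m ∈ R := (Finset.mem_inter.mp (Finset.mem_inter.mp hm).1).1
      rw [hR] at hmR
      obtain ⟨j, hj, hjm⟩ := Finset.mem_image.mp hmR
      rw [Finset.mem_Icc] at hj
      have : m ∈ T := Finset.mem_image.mpr ⟨j, Finset.mem_Icc.mpr ⟨hj.1, by omega⟩, hjm⟩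
      rw [hxa m this]
    · intro m _
      rw [hxk]
      by_cases hmT : m ∈ T
      · rw [hxa m hmT]
      · rw [hxb m hmT]; exact hab.le
end
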